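/- Theorem 3 (linear part): Let F, H : GL(n,ℝ) × gl(n,ℝ) → ℝ be smooth and S-invariant, and define f(L) = F(1_n, L), h(L) = H(1_n, L). Then for every L ∈ gl(n,ℝ), {F,H}_1(1_n, L) = {f,h}_1(L); that is, the canonical Poisson bracket of the cotangent bundle reduces to the linear r-matrix bracket on gl(n,ℝ). -/

import Mathlib

open Matrix

noncomputable section

attribute [local instance] Matrix.frobeniusNormedAddCommGroup Matrix.frobeniusNormedSpace

/-- `gl n` is the space of real `n × n` matrices. -/
abbrev gl (n : ℕ) := Matrix (Fin n) (Fin n) ℝ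

variable {n : ℕ}

/-- The strictly upper triangular part `X_>`. -/
def upPart (X : gl n) : gl n := Matrix.of fun i j => if i < j then X i j else 0

/-- The diagonal part `X_0`. -/
def diagPart (X : gl n) : gl n := Matrix.of fun i j => if i = j then X i j else 0

/-- The strictly lower triangular part `X_<`. -/
def lowPart (X : gl n) : gl n := Matrix.of fun i j => if j < i then X i j else 0

/-- The trace form `⟨X,Y⟩ = tr(XY)`. -/
def trForm (X Y : gl n) : ℝ := (X * Y).trace

/-- `R(X) = ½(X_> + X_0 − X_<) + (X_<)ᵀ`. -/
def Rop (X : gl n) : gl n := (1/2 : ℝ) • (upPart X + diagPart X - lowPart X) + (lowPart X)ᵀ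

/-- `R_a(X) = ½(X_> − X_<)`, the anti-symmetric part of `R`. -/
def Ra (X : gl n) : gl n := (1/2 : ℝ) • (upPart X - lowPart X)

/-- `R_s(X) = ½X_0 + (X_<)ᵀ`, the symmetric part of `R`. -/
def Rs (X : gl n) : gl n := (1/2 : ℝ) • diagPart X + (lowPart X)ᵀ

/-- `r₊ = R_a + ½·id`. -/
def rPlus (X : gl n) : gl n := Ra X + (1/2 : ℝ) • X

/-- `r₋ = R_a − ½·id`. -/
def rMinus (X : gl n) : gl n := Ra X - (1/2 : ℝ) • X

/-- The skew-symmetric part `Z⁺ = ½(Z − Zᵀ)`. -/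
def skewPart (X : gl n) : gl n := (1/2 : ℝ) • (X - Xᵀ)

/-- The symmetric part `Z⁻ = ½(Z + Zᵀ)`. -/
def symPart (X : gl n) : gl n := (1/2 : ℝ) • (X + Xᵀ)

/-- `df` is the gradient of `f` with respect to the trace form:
`tr(df(L)·Y)` is the derivative of `f` at `L` in direction `Y`. -/
def IsGradient (f : gl n → ℝ) (df : gl n → gl n) : Prop :=
  ∀ L Y : gl n, HasDerivAt (fun t : ℝ => f (L + t • Y)) (trForm (df L) Y) 0

/-- `f : gl(n,ℝ) → ℝ` is smooth. -/
def SmoothG (f : gl n → ℝ) : Prop := ContDiff ℝ (⊤ : ℕ∞) f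

/-- The quadratic r-matrix bracket `{f,h}₂(L)`, expressed via the gradient
functions `df`, `dh` of `f` and `h`:
`⟨∇f, R_a∇h⟩ − ⟨∇'f, R_a∇'h⟩ + ⟨∇f, R_s∇'h⟩ − ⟨∇'f, R_s∇h⟩`
with `∇f = L·df(L)` and `∇'f = df(L)·L`. -/
def quadBr (df dh : gl n → gl n) (L : gl n) : ℝ :=
  trForm (L * df L) (Ra (L * dh L)) - trForm (df L * L) (Ra (dh L * L))
    + trForm (L * df L) (Rs (dh L * L)) - trForm (df L * L) (Rs (L * dh L))

/-- The linear r-matrix bracket `{f,h}₁(L) = ⟨L, [R df(L), dh(L)] + [df(L), R dh(L)]⟩`. -/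
def linBr (df dh : gl n → gl n) (L : gl n) : ℝ :=
  trForm L (⁅Rop (df L), dh L⁆ + ⁅df L, Rop (dh L)⁆)

/-- The Toda Hamiltonians `h_k(L) = (1/k)·tr(L^k)`. -/
def hamH (k : ℕ) (L : gl n) : ℝ := (1 / (k : ℝ)) * (L ^ k).trace

/-- `a` is an orthogonal matrix. -/
def IsOrth (a : gl n) : Prop := aᵀ * a = 1

/-- `b` belongs to `B`: upper triangular with strictly positive diagonal entries. -/
def InB (b : gl n) : Prop := b.BlockTriangular id ∧ ∀ i, 0 < b i i

/-- `F : 𝔐 → ℝ` is invariant under the action `(g,L) ↦ (a g b⁻¹, a L a⁻¹)`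
of `S = O(n,ℝ) × B` on `𝔐 = GL(n,ℝ) × gl(n,ℝ)`. -/
def SInvariant (F : gl n × gl n → ℝ) : Prop :=
  ∀ a b g L : gl n, IsOrth a → InB b → IsUnit g.det →
    F (a * g * b⁻¹, a * L * a⁻¹) = F (g, L)

/-- `F` is smooth on `𝔐 = GL(n,ℝ) × gl(n,ℝ)`. -/
def SmoothOnM (F : gl n × gl n → ℝ) : Prop :=
  ContDiffOn ℝ (⊤ : ℕ∞) F {p : gl n × gl n | IsUnit p.1.det}

/-- `N` is the left derivative `∇₁F`:
`⟨∇₁F(g,L), X⟩ = d/dt|₀ F(e^{tX} g, L)` for all `X`. -/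
def IsGrad1 (F : gl n × gl n → ℝ) (N : gl n × gl n → gl n) : Prop :=
  ∀ g L : gl n, IsUnit g.det → ∀ X : gl n,
    HasDerivAt (fun t : ℝ => F (NormedSpace.exp (t • X) * g, L)) (trForm (N (g, L)) X) 0

/-- `N` is the right derivative `∇₁'F`:
`⟨∇₁'F(g,L), X⟩ = d/dt|₀ F(g e^{tX}, L)` for all `X`. -/
def IsGrad1' (F : gl n × gl n → ℝ) (N : gl n × gl n → gl n) : Prop :=
  ∀ g L : gl n, IsUnit g.det → ∀ X : gl n,
    HasDerivAt (fun t : ℝ => F (g * NormedSpace.exp (t • X), L)) (trForm (N (g, L)) X) 0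

/-- `D` is the gradient `d₂F` of `F` in the second argument. -/
def IsGrad2 (F : gl n × gl n → ℝ) (D : gl n × gl n → gl n) : Prop :=
  ∀ g L : gl n, IsUnit g.det → ∀ Y : gl n,
    HasDerivAt (fun t : ℝ => F (g, L + t • Y)) (trForm (D (g, L)) Y) 0

/-- The quadratic bracket `{F,H}₂(g,L)` on `𝔐`, expressed through the derivative data
`nf = ∇₁F(g,L)`, `nf' = ∇₁'F(g,L)`, `d2f = d₂F(g,L)` and likewise for `H`:
`⟨R_a∇₁F, ∇₁H⟩ − ⟨R_a∇₁'F, ∇₁'H⟩ + ⟨∇₂F − ∇₂'F, r₊∇₂'H − r₋∇₂H⟩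
 + ⟨∇₁F, r₊∇₂'H − r₋∇₂H⟩ − ⟨∇₁H, r₊∇₂'F − r₋∇₂F⟩`. -/
def pb2 (nf nf' d2f nh nh' d2h L : gl n) : ℝ :=
  trForm (Ra nf) nh - trForm (Ra nf') nh'
    + trForm (L * d2f - d2f * L) (rPlus (d2h * L) - rMinus (L * d2h))
    + trForm nf (rPlus (d2h * L) - rMinus (L * d2h))
    - trForm nh (rPlus (d2f * L) - rMinus (L * d2f))

/-- The canonical bracket `{F,H}₁(g,L)` on `𝔐`, expressed through the derivative data:
`⟨∇₁F, d₂H⟩ − ⟨∇₁H, d₂F⟩ + ⟨L, [d₂F, d₂H]⟩`. -/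
def pb1 (nf d2f nh d2h L : gl n) : ℝ :=
  trForm nf d2h - trForm nh d2f + trForm L ⁅d2f, d2h⁆

attribute [local instance] Matrix.frobeniusNormedRing Matrix.frobeniusNormedAlgebra

lemma exp_sq_zero (X : gl n) (h : X * X = 0) : NormedSpace.exp X = 1 + X := by
  rw [NormedSpace.exp_eq_tsum (𝕂 := ℝ)]
  have hpow : ∀ k : ℕ, k ∉ ({0, 1} : Finset ℕ) → (k.factorial : ℝ)⁻¹ • X ^ k = 0 := by
    intro k hk
    simp only [Finset.mem_insert, Finset.mem_singleton] at hk
    push_neg at hk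
    obtain ⟨h0, h1⟩ := hk
    have h2 : 2 ≤ k := by omega
    have : X ^ k = 0 := by
      calc X ^ k = X * X * X ^ (k - 2) := by rw [← pow_two, ← pow_add]; congr 1; omega
      _ = 0 := by rw [h, zero_mul]
    simp [this]
  show (∑' k : ℕ, (k.factorial : ℝ)⁻¹ • X ^ k) = 1 + X
  rw [tsum_eq_sum hpow]
  simp [Finset.sum_pair (by norm_num : (0:ℕ) ≠ 1)]

lemma exp_inv_eq (X : gl n) : (NormedSpace.exp X)⁻¹ = NormedSpace.exp (-X) :=
  (Matrix.exp_neg X).symm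

lemma exp_det_unit (X : gl n) : IsUnit (NormedSpace.exp X).det :=
  (Matrix.isUnit_iff_isUnit_det _).mp (NormedSpace.isUnit_exp X)

lemma hexp0 (X : gl n) : HasDerivAt (fun t : ℝ => NormedSpace.exp (t • X)) X 0 := by
  have := hasDerivAt_exp_smul_const (𝕂 := ℝ) X 0
  simp at this
  exact this

lemma grad1_zero {F : gl n × gl n → ℝ} {N : gl n × gl n → gl n} (hN : IsGrad1 F N)
    (L X : gl n) (hc : ∀ t : ℝ, F (NormedSpace.exp (t • X) * 1, L) = F (1, L)) :
    trForm (N (1, L)) X = 0 := by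
  have h1 := hN 1 L (by simp) X
  have h2 : (fun t : ℝ => F (NormedSpace.exp (t • X) * 1, L)) = fun _ => F (1, L) :=
    funext hc
  rw [h2] at h1
  exact h1.unique (hasDerivAt_const 0 _)

lemma grad1_zero_of_B {F : gl n × gl n → ℝ} {N : gl n × gl n → gl n}
    (hFinv : SInvariant F) (hN : IsGrad1 F N) (L X : gl n)
    (hB : ∀ t : ℝ, InB (NormedSpace.exp (-(t • X)))) :
    trForm (N (1, L)) X = 0 := by
  apply grad1_zero hN L X
  intro t
  have := hFinv 1 (NormedSpace.exp (-(t • X))) 1 L (by simp [IsOrth]) (hB t) (by simp)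
  rw [exp_inv_eq, neg_neg] at this
  simpa using this

lemma trForm_diag_zero {F : gl n × gl n → ℝ} {N : gl n × gl n → gl n}
    (hFinv : SInvariant F) (hN : IsGrad1 F N) (L : gl n) (v : Fin n → ℝ) :
    trForm (N (1, L)) (Matrix.diagonal v) = 0 := by
  apply grad1_zero_of_B hFinv hN L
  intro t
  have h1 : -(t • Matrix.diagonal v) = Matrix.diagonal (fun i => -(t * v i)) := by
    ext i j; by_cases h : i = j <;> simp [Matrix.diagonal, h]
  rw [h1, Matrix.exp_diagonal]
  constructor
  · exact Matrix.blockTriangular_diagonal _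
  · intro i
    simp [Matrix.diagonal]
    rw [← Real.exp_eq_exp_ℝ]
    exact Real.exp_pos _

lemma trForm_std_zero {F : gl n × gl n → ℝ} {N : gl n × gl n → gl n}
    (hFinv : SInvariant F) (hN : IsGrad1 F N) (L : gl n) {i j : Fin n} (hij : i < j) (c : ℝ) :
    trForm (N (1, L)) (Matrix.single i j c) = 0 := by
  apply grad1_zero_of_B hFinv hN L
  intro t
  have key : ∀ d : ℝ, Matrix.single i j d * Matrix.single i j d = 0 :=
    fun d => Matrix.single_mul_single_of_ne (c := d) i j i (ne_of_gt hij) d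
  have hrw : -(t • Matrix.single i j c) = Matrix.single i j (-(t * c)) := by
    ext p q; by_cases h : i = p ∧ j = q <;> simp [Matrix.single, h]
  rw [hrw, exp_sq_zero _ (key _)]
  have happ : ∀ (d : ℝ) (p q : Fin n), ¬(i = p ∧ j = q) → Matrix.single i j d p q = 0 :=
    fun d p q h => Matrix.single_apply_of_ne i j d p q h
  constructor
  · intro p q hpq
    have h1 : (1 : gl n) p q = 0 := Matrix.one_apply_ne (ne_of_gt hpq)
    have h2 : Matrix.single i j (-(t * c)) p q = 0 := by
      apply happ
      rintro ⟨rfl, rfl⟩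
      exact absurd hij (not_lt_of_gt hpq)
    simp [h1, h2]
  · intro p
    have h2 : Matrix.single i j (-(t * c)) p p = 0 := by
      apply happ
      rintro ⟨rfl, rfl⟩
      exact absurd rfl (ne_of_lt hij)
    simp [h2]

lemma trForm_upper_zero {F : gl n × gl n → ℝ} {N : gl n × gl n → gl n}
    (hFinv : SInvariant F) (hN : IsGrad1 F N) (L : gl n) (B : gl n)
    (hB : ∀ p q : Fin n, q < p → B p q = 0) :
    trForm (N (1, L)) B = 0 := by
  conv_lhs => rw [Matrix.matrix_eq_sum_single B]
  have hlin : trForm (N (1, L)) (∑ p : Fin n, ∑ q : Fin n, Matrix.single p q (B p q))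
      = ∑ p : Fin n, ∑ q : Fin n, trForm (N (1, L)) (Matrix.single p q (B p q)) := by
    simp [trForm, Matrix.mul_sum, Matrix.trace_sum]
  rw [hlin]
  apply Finset.sum_eq_zero
  intro p _
  apply Finset.sum_eq_zero
  intro q _
  rcases lt_trichotomy p q with h | h | h
  · exact trForm_std_zero hFinv hN L h _
  · subst h
    have : Matrix.single p p (B p p) = Matrix.diagonal (Pi.single p (B p p)) := by
      ext a b
      by_cases h1 : p = a <;> by_cases h2 : a = b <;>
        simp [Matrix.single, Matrix.diagonal, Pi.single_apply, h1, h2] <;> aesop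
    rw [this]
    exact trForm_diag_zero hFinv hN L _
  · rw [hB p q h]
    simp [trForm]

lemma hasFDeriv_of_smooth {F : gl n × gl n → ℝ} (hF : SmoothOnM F) (L : gl n) :
    HasFDerivAt F (fderiv ℝ F (1, L)) (1, L) := by
  have hopen : IsOpen {p : gl n × gl n | IsUnit p.1.det} := by
    have h1 : {p : gl n × gl n | IsUnit p.1.det}
        = (fun p : gl n × gl n => p.1.det) ⁻¹' ({0}ᶜ) := by
      ext p; simp [isUnit_iff_ne_zero]
    rw [h1]
    exact (isOpen_compl_singleton).preimage (Continuous.matrix_det continuous_fst)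
  have hmem : (1, L) ∈ {p : gl n × gl n | IsUnit p.1.det} := by simp
  exact ((hF.differentiableOn (by simp)).differentiableAt (hopen.mem_nhds hmem)).hasFDerivAt

lemma phi_snd {F : gl n × gl n → ℝ} {D : gl n × gl n → gl n}
    {Φ : gl n × gl n →L[ℝ] ℝ} {L : gl n}
    (hΦ : HasFDerivAt F Φ (1, L)) (hD : IsGrad2 F D) (Y : gl n) :
    Φ (0, Y) = trForm (D (1, L)) Y := by
  have hc : HasDerivAt (fun t : ℝ => ((1 : gl n), L + t • Y)) ((0 : gl n), Y) 0 := by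
    apply HasDerivAt.prodMk (hasDerivAt_const (0:ℝ) _)
    have := ((hasDerivAt_id (0:ℝ)).smul_const Y).const_add L
    simpa using this
  have hΦ' : HasFDerivAt F Φ ((1 : gl n), L + (0:ℝ) • Y) := by simpa using hΦ
  have := hΦ'.comp_hasDerivAt 0 hc
  exact this.unique (hD 1 L (by simp) Y)

lemma phi_fst {F : gl n × gl n → ℝ} {N : gl n × gl n → gl n}
    {Φ : gl n × gl n →L[ℝ] ℝ} {L : gl n}
    (hΦ : HasFDerivAt F Φ (1, L)) (hN : IsGrad1 F N) (X : gl n) :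
    Φ (X, 0) = trForm (N (1, L)) X := by
  have hc : HasDerivAt (fun t : ℝ => (NormedSpace.exp (t • X) * 1, L)) (X, (0 : gl n)) 0 := by
    apply HasDerivAt.prodMk _ (hasDerivAt_const (0:ℝ) _)
    have := (hexp0 X).mul_const (1 : gl n)
    simpa using this
  have hΦ' : HasFDerivAt F Φ (NormedSpace.exp ((0:ℝ) • X) * 1, L) := by
    simpa [NormedSpace.exp_zero] using hΦ
  have := hΦ'.comp_hasDerivAt 0 hc
  exact this.unique (hN 1 L (by simp) X)

lemma exp_orth {A : gl n} (hA : Aᵀ = -A) (t : ℝ) : IsOrth (NormedSpace.exp (t • A)) := by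
  unfold IsOrth
  rw [← Matrix.exp_transpose, Matrix.transpose_smul, hA]
  have : t • (-A) = -(t • A) := by rw [smul_neg]
  rw [this, Matrix.exp_neg]
  exact Matrix.nonsing_inv_mul _ (exp_det_unit _)

lemma phi_skew {F : gl n × gl n → ℝ} {Φ : gl n × gl n →L[ℝ] ℝ} {L : gl n}
    (hΦ : HasFDerivAt F Φ (1, L)) (hFinv : SInvariant F)
    {A : gl n} (hA : Aᵀ = -A) :
    Φ (A, A * L - L * A) = 0 := by
  set c : ℝ → gl n × gl n := fun t =>
    (NormedSpace.exp (t • A), NormedSpace.exp (t • A) * L * NormedSpace.exp (t • (-A)))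
  have hconst : ∀ t : ℝ, F (c t) = F (1, L) := by
    intro t
    have h1 := hFinv (NormedSpace.exp (t • A)) 1 1 L (exp_orth hA t)
      ⟨Matrix.blockTriangular_one, fun i => by simp⟩ (by simp)
    have h2 : (NormedSpace.exp (t • A))⁻¹ = NormedSpace.exp (t • (-A)) := by
      rw [smul_neg, Matrix.exp_neg]
    simpa [c, h2] using h1
  have hc : HasDerivAt c (A, A * L - L * A) 0 := by
    apply HasDerivAt.prodMk (hexp0 A)
    have h1 := ((hexp0 A).mul_const L).mul (hexp0 (-A))
    have h2 : A * L * NormedSpace.exp ((0:ℝ) • (-A))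
        + NormedSpace.exp ((0:ℝ) • A) * L * (-A) = A * L - L * A := by
      simp [NormedSpace.exp_zero, mul_neg, sub_eq_add_neg]
    rw [h2] at h1
    exact h1
  have hΦ' : HasFDerivAt F Φ (c 0) := by
    simp only [c, zero_smul, NormedSpace.exp_zero, one_mul, mul_one]
    exact hΦ
  have hcomp := hΦ'.comp_hasDerivAt 0 hc
  have : (fun t => F (c t)) = fun _ => F (1, L) := funext hconst
  rw [show (F ∘ c) = fun t => F (c t) from rfl, this] at hcomp
  exact hcomp.unique (hasDerivAt_const 0 _)

lemma trForm_nondeg {X Z : gl n} (h : ∀ Y, trForm X Y = trForm Z Y) : X = Z := by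
  ext i j
  have := h (Matrix.single j i 1)
  simpa [trForm, Matrix.trace, Matrix.mul_apply, Matrix.diag, Matrix.single, ite_and,
    Finset.sum_ite_eq, Finset.sum_ite_eq'] using this

lemma grad_eq {F : gl n × gl n → ℝ} {D : gl n × gl n → gl n} {df : gl n → gl n}
    (hD : IsGrad2 F D) (hdf : IsGradient (fun L : gl n => F (1, L)) df) (L : gl n) :
    D (1, L) = df L := by
  apply trForm_nondeg
  intro Y
  exact (hD 1 L (by simp) Y).unique (hdf L Y)

lemma Rop_eq (X : gl n) : Rop X = (1/2 : ℝ) • X - (lowPart X - (lowPart X)ᵀ) := by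
  ext i j
  simp only [Rop, upPart, diagPart, lowPart, Matrix.add_apply, Matrix.sub_apply,
    Matrix.smul_apply, Matrix.transpose_apply, Matrix.of_apply, smul_eq_mul]
  rcases lt_trichotomy i j with h | h | h
  · rw [if_pos h, if_neg (ne_of_lt h), if_neg (lt_asymm h), if_pos h]
    ring
  · rw [if_neg (by rw [h]; exact lt_irrefl j), if_pos h, if_neg (by rw [h]; exact lt_irrefl j),
      if_neg (by rw [h]; exact lt_irrefl j)]
    ring
  · rw [if_neg (not_lt_of_gt h), if_neg (ne_of_gt h), if_pos h, if_neg (lt_asymm h)]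
    ring

lemma key_alg (L f' h' A B : gl n) :
    -(trForm f' (B * L - L * B)) + trForm h' (A * L - L * A) + trForm L (f' * h' - h' * f')
    = trForm L ((((1:ℝ)/2) • f' - A) * h' - h' * (((1:ℝ)/2) • f' - A)
        + (f' * (((1:ℝ)/2) • h' - B) - (((1:ℝ)/2) • h' - B) * f')) := by
  simp only [trForm, mul_sub, sub_mul, mul_add, add_mul, smul_mul_assoc, mul_smul_comm,
    Matrix.trace_sub, Matrix.trace_add, Matrix.trace_smul, smul_eq_mul, ← mul_assoc]
  have r1 : (f' * B * L).trace = (L * f' * B).trace := Matrix.trace_mul_cycle f' B L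
  have r2 : (f' * L * B).trace = (L * B * f').trace := (Matrix.trace_mul_cycle L B f').symm
  have r3 : (h' * A * L).trace = (L * h' * A).trace := Matrix.trace_mul_cycle h' A L
  have r4 : (h' * L * A).trace = (L * A * h').trace := (Matrix.trace_mul_cycle L A h').symm
  linarith

/-- Theorem 3, linear part: for `S`-invariant `F, H` and the
functions `f(L) = F(1ₙ,L)`, `h(L) = H(1ₙ,L)`, the canonical bracket on `T*GL(n,ℝ)`
reduces to the linear r-matrix bracket: `{F,H}₁(1ₙ, L) = {f,h}₁(L)`. -/
theorem stmt19 (n : ℕ) (F H : gl n × gl n → ℝ)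
    (hF : SmoothOnM F) (hH : SmoothOnM H)
    (hFinv : SInvariant F) (hHinv : SInvariant H)
    (NF DF NH DH : gl n × gl n → gl n)
    (hNF : IsGrad1 F NF) (hDF : IsGrad2 F DF)
    (hNH : IsGrad1 H NH) (hDH : IsGrad2 H DH)
    (df dh : gl n → gl n)
    (hdf : IsGradient (fun L : gl n => F (1, L)) df)
    (hdh : IsGradient (fun L : gl n => H (1, L)) dh)
    (L : gl n) :
    pb1 (NF (1, L)) (DF (1, L)) (NH (1, L)) (DH (1, L)) L = linBr df dh L := by
  have hΦF := hasFDeriv_of_smooth hF L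
  have hΦH := hasFDeriv_of_smooth hH L
  have hDFeq : DF (1, L) = df L := grad_eq hDF hdf L
  have hDHeq : DH (1, L) = dh L := grad_eq hDH hdh L
  set f' := df L with hf'def
  set h' := dh L with hh'def
  set Af := lowPart f' - (lowPart f')ᵀ with hAfdef
  set Ah := lowPart h' - (lowPart h')ᵀ with hAhdef
  have hskewT : ∀ Z : gl n, (lowPart Z - (lowPart Z)ᵀ)ᵀ = -(lowPart Z - (lowPart Z)ᵀ) := by
    intro Z
    rw [Matrix.transpose_sub, Matrix.transpose_transpose, neg_sub]
  -- skew identities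
  have skewF : ∀ A : gl n, Aᵀ = -A →
      trForm (NF (1, L)) A = - trForm f' (A * L - L * A) := by
    intro A hA
    have h0 := phi_skew hΦF hFinv hA
    have h1 : ((A, A * L - L * A) : gl n × gl n) = (A, 0) + (0, A * L - L * A) := by simp
    rw [h1, map_add, phi_fst hΦF hNF, phi_snd hΦF hDF, hDFeq] at h0
    linarith
  have skewH : ∀ A : gl n, Aᵀ = -A →
      trForm (NH (1, L)) A = - trForm h' (A * L - L * A) := by
    intro A hA
    have h0 := phi_skew hΦH hHinv hA
    have h1 : ((A, A * L - L * A) : gl n × gl n) = (A, 0) + (0, A * L - L * A) := by simp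
    rw [h1, map_add, phi_fst hΦH hNH, phi_snd hΦH hDH, hDHeq] at h0
    linarith
  -- upper-triangular vanishing
  have hupper : ∀ Z : gl n, ∀ p q : Fin n, q < p → (Z - (lowPart Z - (lowPart Z)ᵀ)) p q = 0 := by
    intro Z p q hpq
    simp only [Matrix.sub_apply, Matrix.transpose_apply, lowPart, Matrix.of_apply]
    rw [if_pos hpq, if_neg (lt_asymm hpq)]
    ring
  have upF : trForm (NF (1, L)) (h' - Ah) = 0 :=
    trForm_upper_zero hFinv hNF L _ (hupper h')
  have upH : trForm (NH (1, L)) (f' - Af) = 0 :=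
    trForm_upper_zero hHinv hNH L _ (hupper f')
  -- decompose
  have hdec : ∀ X Y Z : gl n, trForm X Y = trForm X (Y - Z) + trForm X Z := by
    intro X Y Z
    simp [trForm, Matrix.mul_sub, Matrix.trace_sub]
  have e1 : trForm (NF (1, L)) h' = - trForm f' (Ah * L - L * Ah) := by
    rw [hdec _ h' Ah, upF, zero_add, skewF Ah (hskewT h')]
  have e2 : trForm (NH (1, L)) f' = - trForm h' (Af * L - L * Af) := by
    rw [hdec _ f' Af, upH, zero_add, skewH Af (hskewT f')]
  -- conclude
  rw [pb1, hDFeq, hDHeq, e1, e2]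
  rw [linBr, ← hf'def, ← hh'def, Rop_eq, Rop_eq, ← hAfdef, ← hAhdef]
  simp only [Ring.lie_def]
  linarith [key_alg L f' h' Af Ah]
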